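/- Let s, t ≥ 0 with |t - s| > 1. Then the function z(x) = [Γ(x+t)/Γ(x+s)]^{1/(t-s)} − x is increasing on (0, ∞). -/

import Mathlib

noncomputable def z (s t x : ℝ) : ℝ :=
  (Real.Gamma (x + t) / Real.Gamma (x + s)) ^ ((1 : ℝ) / (t - s)) - x

/-!
Let `d = t - s > 1` (the case `t < s` follows from `z s t = z t s`), let `ψ` be the digamma
function, `F x = (Γ(x+t)/Γ(x+s))^(1/d)` and `D x = ψ(x+t) - ψ(x+s)`. Then `z' = F D / d - 1`, so
it suffices that `h = F D > d`. Log-convexity of `Γ` and the series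
`D x = ∑ d / ((x+s+k)(x+t+k))` give `h x ≥ d (x+s-1)/(x+t) → d`, hence it is enough that `h` is
strictly decreasing, i.e. `D² < d (ψ'(x+s) - ψ'(x+t))`. With `T y = ψ(y+d) - ψ y`, both sides
telescope along `y, y+1, y+2, …`, and since `T y - T (y+1) = 1/y - 1/(y+d)` the inequality of the
increments is `T y + T (y+1) < d (1/y + 1/(y+d))`. Comparing the series of `T (y+1)` with a
telescoping series reduces this to `d² > 1`.
-/

open Real Set Filter Topology

theorem hasSum_sub_succ_of_tendsto {f : ℕ → ℝ} {l : ℝ} (hf : ∀ n, f (n + 1) ≤ f n)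
    (hl : Tendsto f atTop (𝓝 l)) : HasSum (fun n => f n - f (n + 1)) (f 0 - l) := by
  rw [hasSum_iff_tendsto_nat_of_nonneg fun n => sub_nonneg.mpr (hf n)]
  simp_rw [Finset.sum_range_sub']
  exact tendsto_const_nhds.sub hl

theorem summable_one_div_add_sq {c : ℝ} (hc : 0 < c) :
    Summable fun k : ℕ => 1 / (c + k) ^ 2 := by
  refine ((summable_one_div_nat_add_rpow c 2).mpr one_lt_two).congr fun k => ?_
  rw [abs_of_pos (by positivity), add_comm, rpow_two]

noncomputable def digamma (x : ℝ) : ℝ := deriv (fun y => log (Gamma y)) x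

noncomputable def trigamma (x : ℝ) : ℝ := ∑' k : ℕ, 1 / (x + k) ^ 2

section Digamma

variable {x : ℝ}

theorem differentiableAt_log_Gamma (hx : 0 < x) :
    DifferentiableAt ℝ (fun y => log (Gamma y)) x :=
  (differentiableAt_Gamma fun m => ((neg_nonpos.mpr m.cast_nonneg).trans_lt hx).ne').log
    (Gamma_pos_of_pos hx).ne'

theorem hasDerivAt_log_Gamma (hx : 0 < x) :
    HasDerivAt (fun y => log (Gamma y)) (digamma x) x :=
  (differentiableAt_log_Gamma hx).hasDerivAt

theorem log_Gamma_add_one (hx : 0 < x) : log (Gamma (x + 1)) = log (Gamma x) + log x := by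
  rw [Gamma_add_one hx.ne', log_mul hx.ne' (Gamma_pos_of_pos hx).ne', add_comm]

theorem digamma_add_one (hx : 0 < x) : digamma (x + 1) = digamma x + 1 / x := by
  unfold digamma
  rw [← deriv_comp_add_const, one_div, ← deriv_log,
    ← deriv_add (differentiableAt_log_Gamma hx) (differentiableAt_log hx.ne')]
  refine EventuallyEq.deriv_eq ?_
  filter_upwards [eventually_gt_nhds hx] with y hy using log_Gamma_add_one hy

theorem monotoneOn_digamma : MonotoneOn digamma (Ioi 0) :=
  convexOn_log_Gamma.monotoneOn_deriv fun _ hx => differentiableAt_log_Gamma hx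

theorem digamma_le_log (hx : 0 < x) : digamma x ≤ log x := by
  have h := convexOn_log_Gamma.deriv_le_slope (mem_Ioi.mpr hx)
    (mem_Ioi.mpr (by linarith : 0 < x + 1)) (lt_add_one x) (differentiableAt_log_Gamma hx)
  rwa [slope_def_field, add_sub_cancel_left, div_one, Function.comp_apply, Function.comp_apply,
    log_Gamma_add_one hx, add_sub_cancel_left] at h

theorem log_le_digamma_add_one (hx : 0 < x) : log x ≤ digamma (x + 1) := by
  have h := convexOn_log_Gamma.slope_le_deriv (mem_Ioi.mpr hx)
    (mem_Ioi.mpr (by linarith : 0 < x + 1)) (lt_add_one x)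
    (differentiableAt_log_Gamma (by linarith))
  rwa [slope_def_field, add_sub_cancel_left, div_one, Function.comp_apply, Function.comp_apply,
    log_Gamma_add_one hx, add_sub_cancel_left] at h

theorem tendsto_digamma_add_nat_sub {u v : ℝ} (hu : 0 < u) (huv : u ≤ v) :
    Tendsto (fun n : ℕ => digamma (v + n) - digamma (u + n)) atTop (𝓝 0) := by
  have hv : 0 < v := hu.trans_le huv
  have hlog : Tendsto (fun n : ℕ => log ((u - 1 + n) + (v - u + 1)) - log (u - 1 + n)) atTop
      (𝓝 0) :=
    (tendsto_log_comp_add_sub_log _).comp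
      (tendsto_atTop_add_const_left _ _ tendsto_natCast_atTop_atTop)
  refine tendsto_of_tendsto_of_tendsto_of_le_of_le' tendsto_const_nhds hlog
    (Eventually.of_forall fun n => sub_nonneg.mpr ?_) ?_
  · exact monotoneOn_digamma (mem_Ioi.mpr (by positivity)) (mem_Ioi.mpr (by positivity))
      (by linarith)
  · filter_upwards [eventually_ge_atTop 1] with n hn
    have hn' : (1 : ℝ) ≤ n := by exact_mod_cast hn
    have hv := digamma_le_log (show 0 < v + n by linarith)
    have hu' := log_le_digamma_add_one (show 0 < u - 1 + n by linarith)
    rw [show u - 1 + n + 1 = u + n by ring] at hu'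
    rw [show u - 1 + n + (v - u + 1) = v + n by ring]
    linarith

theorem hasSum_digamma_sub {u v : ℝ} (hu : 0 < u) (huv : u ≤ v) :
    HasSum (fun k : ℕ => 1 / (u + k) - 1 / (v + k)) (digamma v - digamma u) := by
  have hv : 0 < v := hu.trans_le huv
  have hstep : ∀ n : ℕ, (digamma (v + n) - digamma (u + n))
      - (digamma (v + (n + 1 : ℕ)) - digamma (u + (n + 1 : ℕ)))
      = 1 / (u + n) - 1 / (v + n) := fun n => by
    rw [Nat.cast_succ, ← add_assoc, ← add_assoc, digamma_add_one (by positivity),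
      digamma_add_one (by positivity)]
    ring
  have hterm : ∀ n : ℕ, 1 / (v + n) ≤ 1 / (u + n) := fun n =>
    one_div_le_one_div_of_le (by positivity) (by linarith)
  simpa only [hstep, Nat.cast_zero, add_zero, sub_zero] using
    hasSum_sub_succ_of_tendsto (fun n => by linarith [hstep n, hterm n])
      (tendsto_digamma_add_nat_sub hu huv)

theorem hasDerivAt_digamma (hx : 0 < x) : HasDerivAt digamma (trigamma x) x := by
  have hc : 0 < x / 2 := by linarith
  have hseries : HasDerivAt (fun y => ∑' k : ℕ, (1 / (x / 2 + k) - 1 / (y + k)))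
      (trigamma x) x := by
    refine hasDerivAt_tsum_of_isPreconnected (t := Ioi (x / 2)) (summable_one_div_add_sq hc)
      isOpen_Ioi isPreconnected_Ioi (g' := fun (k : ℕ) (y : ℝ) => 1 / (y + k) ^ 2)
      (fun k y hy => ?_) (fun k y hy => ?_) (mem_Ioi.mpr (half_lt_self hx))
      (hasSum_digamma_sub hc (half_le_self hx.le)).summable (mem_Ioi.mpr (half_lt_self hx))
    · have hy : 0 < y + k := by linarith [mem_Ioi.mp hy, k.cast_nonneg (α := ℝ)]
      simpa [one_div, neg_div] using
        (((hasDerivAt_id y).add_const (k : ℝ)).inv hy.ne').const_sub (1 / (x / 2 + k))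
    · have hy := mem_Ioi.mp hy
      rw [norm_of_nonneg (by positivity)]
      gcongr
  refine (hseries.const_add (digamma (x / 2))).congr_of_eventuallyEq ?_
  filter_upwards [eventually_gt_nhds (half_lt_self hx)] with y hy
  rw [(hasSum_digamma_sub hc hy.le).tsum_eq]
  ring

end Digamma

section DigammaGap

variable {y d : ℝ}

theorem hasSum_digamma_add_sub (hy : 0 < y) (hd : 0 ≤ d) :
    HasSum (fun k : ℕ => d / ((y + k) * (y + k + d))) (digamma (y + d) - digamma y) := by
  convert hasSum_digamma_sub hy (le_add_of_nonneg_right hd) using 2 with k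
  have : 0 < y + k := by positivity
  field_simp
  ring

theorem hasSum_one_div_mul_add_one (hy : 0 < y) :
    HasSum (fun k : ℕ => 1 / ((y + k) * (y + k + 1))) (1 / y) := by
  simpa [digamma_add_one hy] using hasSum_digamma_add_sub hy zero_le_one

theorem div_add_le_digamma_add_sub (hy : 0 < y) (hd : 0 ≤ d) :
    d / (y + d) ≤ digamma (y + d) - digamma y := by
  have hyd : 0 < y + d := by linarith
  have h := (hasSum_one_div_mul_add_one hyd).mul_left d
  simp only [mul_one_div] at h
  refine hasSum_le (fun k => ?_) h (hasSum_digamma_add_sub hy hd)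
  have : 0 < y + k := by positivity
  exact div_le_div_of_nonneg_left hd (by positivity) (by nlinarith)

theorem digamma_add_sub_le (hy : 0 < y) (hd : 1 ≤ d) :
    digamma (y + d) - digamma y ≤ d * (2 * y + d + 1) / (2 * y * (y + d)) := by
  -- `(w + k) * (w + k + 1)` and `(y + k) * (y + k + d)` have the same midpoint
  -- `m = y + k + d / 2`; their ratio `(m² - 1/4) / (m² - d²/4)` is largest at `k = 0`
  set w := y + (d - 1) / 2 with hw_def
  have hw : 0 < w := by positivity
  have hC := (hasSum_one_div_mul_add_one hw).mul_left (d * (w * (w + 1)) / (y * (y + d)))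
  simp only [mul_one_div, div_div] at hC
  calc digamma (y + d) - digamma y ≤ d * (w * (w + 1)) / (y * (y + d) * w) :=
        hasSum_le (fun k => ?_) (hasSum_digamma_add_sub hy (by linarith)) hC
    _ = d * (2 * y + d + 1) / (2 * y * (y + d)) := by
        field_simp
        rw [hw_def]
        ring
  have hk : (0 : ℝ) ≤ k := k.cast_nonneg
  rw [div_le_div_iff₀ (by positivity) (by positivity)]
  have key : d * (w * (w + 1)) * ((y + k) * (y + k + d))
      - d * (y * (y + d) * ((w + k) * (w + k + 1)))
      = d * k * (2 * y + d + k) * (d ^ 2 - 1) / 4 := by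
    rw [hw_def]
    ring
  have : 0 ≤ d * k * (2 * y + d + k) * (d ^ 2 - 1) / 4 := by
    have : 0 ≤ d ^ 2 - 1 := by nlinarith
    positivity
  linarith

theorem digamma_add_one_add_sub_digamma_add_one (hy : 0 < y) (hd : 0 ≤ d) :
    digamma (y + 1 + d) - digamma (y + 1)
      = digamma (y + d) - digamma y - (1 / y - 1 / (y + d)) := by
  rw [show y + 1 + d = y + d + 1 by ring, digamma_add_one hy, digamma_add_one (by linarith)]
  ring

theorem sq_digamma_add_sub_sub_sq_lt (hy : 0 < y) (hd : 1 < d) :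
    (digamma (y + d) - digamma y) ^ 2 - (digamma (y + 1 + d) - digamma (y + 1)) ^ 2
      < d * (1 / y ^ 2 - 1 / (y + d) ^ 2) := by
  have hyd : 0 < y + d := by linarith
  have hdiff : (digamma (y + d) - digamma y) - (digamma (y + 1 + d) - digamma (y + 1))
      = 1 / y - 1 / (y + d) := by
    rw [digamma_add_one_add_sub_digamma_add_one hy (by linarith)]
    ring
  set T₀ := digamma (y + d) - digamma y
  set T₁ := digamma (y + 1 + d) - digamma (y + 1)
  have hT₁ := digamma_add_sub_le (show 0 < y + 1 by linarith) hd.le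
  have hgap : d * (1 / y + 1 / (y + d))
      - (2 * (d * (2 * (y + 1) + d + 1) / (2 * (y + 1) * (y + 1 + d))) + (1 / y - 1 / (y + d)))
      = d * (d ^ 2 - 1) / (y * (y + d) * (y + 1) * (y + 1 + d)) := by
    field_simp
    ring
  have hsum : T₀ + T₁ < d * (1 / y + 1 / (y + d)) := by
    have : 0 < d * (d ^ 2 - 1) / (y * (y + d) * (y + 1) * (y + 1 + d)) := by
      have : 0 < d ^ 2 - 1 := by nlinarith
      positivity
    linarith
  have hpos : 0 < 1 / y - 1 / (y + d) :=
    sub_pos.mpr (one_div_lt_one_div_of_lt hy (by linarith))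
  calc T₀ ^ 2 - T₁ ^ 2 = (T₀ - T₁) * (T₀ + T₁) := by ring
    _ < (1 / y - 1 / (y + d)) * (d * (1 / y + 1 / (y + d))) := by
        rw [hdiff]
        exact mul_lt_mul_of_pos_left hsum hpos
    _ = d * (1 / y ^ 2 - 1 / (y + d) ^ 2) := by
        field_simp
        ring

theorem sq_digamma_add_sub_lt (hy : 0 < y) (hd : 1 < d) :
    (digamma (y + d) - digamma y) ^ 2 < d * (trigamma y - trigamma (y + d)) := by
  have hyd : 0 < y + d := by linarith
  set G : ℕ → ℝ := fun n => digamma (y + n + d) - digamma (y + n) with hG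
  have hcast : ∀ n : ℕ, G (n + 1) = digamma (y + n + 1 + d) - digamma (y + n + 1) := fun n => by
    simp only [hG]
    push_cast
    ring_nf
  have hG_nonneg : ∀ n, 0 ≤ G n := fun n =>
    sub_nonneg.mpr (monotoneOn_digamma (mem_Ioi.mpr (by positivity))
      (mem_Ioi.mpr (by positivity)) (by linarith))
  have hG_succ : ∀ n, G (n + 1) ≤ G n := fun n => by
    have hyn : 0 < y + n := by positivity
    rw [hcast, digamma_add_one_add_sub_digamma_add_one hyn (by linarith)]
    have : 1 / (y + n + d) ≤ 1 / (y + n) := one_div_le_one_div_of_le hyn (by linarith)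
    linarith
  have hG_lim : Tendsto G atTop (𝓝 0) := by
    refine (tendsto_digamma_add_nat_sub hy (le_add_of_nonneg_right (by linarith))).congr
      fun n => ?_
    rw [add_right_comm]
  have hlhs := hasSum_sub_succ_of_tendsto
    (fun n => pow_le_pow_left₀ (hG_nonneg (n + 1)) (hG_succ n) 2) ((hG_lim.pow 2))
  have hrhs :=
    ((summable_one_div_add_sq hy).hasSum.sub (summable_one_div_add_sq hyd).hasSum).mul_left d
  have hstep : ∀ n : ℕ, G n ^ 2 - G (n + 1) ^ 2 < d * (1 / (y + n) ^ 2 - 1 / (y + d + n) ^ 2) :=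
    fun n => by
    rw [hcast, add_right_comm y d]
    exact sq_digamma_add_sub_sub_sq_lt (by positivity) hd
  simpa [hG, trigamma] using hasSum_lt (fun n => (hstep n).le) (hstep 0) hlhs hrhs

end DigammaGap

noncomputable def gammaRatioRoot (s t x : ℝ) : ℝ :=
  exp ((log (Gamma (x + t)) - log (Gamma (x + s))) / (t - s))

section GammaRatio

variable {s t x : ℝ}

theorem gammaRatioRoot_comm : gammaRatioRoot s t x = gammaRatioRoot t s x := by
  rw [gammaRatioRoot, gammaRatioRoot, ← neg_div_neg_eq, neg_sub, neg_sub]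

theorem z_eq_gammaRatioRoot_sub (hs : 0 < x + s) (ht : 0 < x + t) :
    z s t x = gammaRatioRoot s t x - x := by
  have hΓs := Gamma_pos_of_pos hs
  have hΓt := Gamma_pos_of_pos ht
  rw [z, gammaRatioRoot, rpow_def_of_pos (div_pos hΓt hΓs), log_div hΓt.ne' hΓs.ne', mul_one_div]

theorem z_comm (hs : 0 < x + s) (ht : 0 < x + t) : z s t x = z t s x := by
  rw [z_eq_gammaRatioRoot_sub hs ht, z_eq_gammaRatioRoot_sub ht hs, gammaRatioRoot_comm]

theorem hasDerivAt_gammaRatioRoot (hs : 0 < x + s) (ht : 0 < x + t) :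
    HasDerivAt (gammaRatioRoot s t)
      (gammaRatioRoot s t x * ((digamma (x + t) - digamma (x + s)) / (t - s))) x :=
  ((((hasDerivAt_log_Gamma ht).comp_add_const x t).sub
    ((hasDerivAt_log_Gamma hs).comp_add_const x s)).div_const (t - s)).exp

theorem sub_one_le_gammaRatioRoot (hs : 1 < x + s) (hst : s < t) :
    x + s - 1 ≤ gammaRatioRoot s t x := by
  have hslope := convexOn_log_Gamma.slope_mono_adjacent (y := x + s)
    (mem_Ioi.mpr (by linarith : 0 < x + s - 1)) (mem_Ioi.mpr (by linarith : 0 < x + t))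
    (sub_one_lt _) (by linarith)
  have hrec : log (Gamma (x + s)) - log (Gamma (x + s - 1)) = log (x + s - 1) := by
    have := log_Gamma_add_one (by linarith : 0 < x + s - 1)
    rw [sub_add_cancel] at this
    linarith
  simp only [Function.comp_apply, sub_sub_cancel, div_one, hrec,
    show x + t - (x + s) = t - s by ring] at hslope
  calc x + s - 1 = exp (log (x + s - 1)) := (exp_log (by linarith)).symm
    _ ≤ gammaRatioRoot s t x := exp_le_exp.mpr hslope

end GammaRatio

section Monotone

variable {s t : ℝ}

theorem hasDerivAt_gammaRatioRoot_mul_digamma_sub {x : ℝ} (hs : 0 < x + s) (ht : 0 < x + t) :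
    HasDerivAt (fun x => gammaRatioRoot s t x * (digamma (x + t) - digamma (x + s)))
      (gammaRatioRoot s t x * ((digamma (x + t) - digamma (x + s)) ^ 2 / (t - s)
        - (trigamma (x + s) - trigamma (x + t)))) x := by
  have hD : HasDerivAt (fun x => digamma (x + t) - digamma (x + s))
      (trigamma (x + t) - trigamma (x + s)) x :=
    ((hasDerivAt_digamma ht).comp_add_const x t).sub ((hasDerivAt_digamma hs).comp_add_const x s)
  exact ((hasDerivAt_gammaRatioRoot hs ht).mul hD).congr_deriv (by ring)

theorem strictAntiOn_gammaRatioRoot_mul_digamma_sub (hd : 1 < t - s) :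
    StrictAntiOn (fun x => gammaRatioRoot s t x * (digamma (x + t) - digamma (x + s)))
      (Ioi (-s)) := by
  have hderiv : ∀ x ∈ Ioi (-s), HasDerivAt
      (fun x => gammaRatioRoot s t x * (digamma (x + t) - digamma (x + s)))
      (gammaRatioRoot s t x * ((digamma (x + t) - digamma (x + s)) ^ 2 / (t - s)
        - (trigamma (x + s) - trigamma (x + t)))) x := fun x hx =>
    hasDerivAt_gammaRatioRoot_mul_digamma_sub (by linarith [mem_Ioi.mp hx])
      (by linarith [mem_Ioi.mp hx])
  refine strictAntiOn_of_deriv_neg (convex_Ioi _)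
    (fun x hx => (hderiv x hx).continuousAt.continuousWithinAt) fun x hx => ?_
  rw [interior_Ioi] at hx
  rw [(hderiv x hx).deriv]
  refine mul_neg_of_pos_of_neg (exp_pos _) (sub_neg.mpr ((div_lt_iff₀ (by linarith)).mpr ?_))
  have := sq_digamma_add_sub_lt (y := x + s) (by linarith [mem_Ioi.mp hx]) hd
  rw [show x + s + (t - s) = x + t by ring] at this
  linarith

theorem sub_lt_gammaRatioRoot_mul_digamma_sub (hd : 1 < t - s) {x : ℝ} (hx : -s < x) :
    t - s < gammaRatioRoot s t x * (digamma (x + t) - digamma (x + s)) := by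
  have hanti := strictAntiOn_gammaRatioRoot_mul_digamma_sub hd
  have hlower : ∀ y, 1 - s < y → (y + s - 1) * ((t - s) / (y + t))
      ≤ gammaRatioRoot s t y * (digamma (y + t) - digamma (y + s)) := fun y hy => by
    have hD := div_add_le_digamma_add_sub (y := y + s) (d := t - s) (by linarith) (by linarith)
    rw [show y + s + (t - s) = y + t by ring] at hD
    exact mul_le_mul (sub_one_le_gammaRatioRoot (by linarith) (by linarith)) hD
      (div_nonneg (by linarith) (by linarith)) (exp_pos _).le
  have hlim : Tendsto (fun y => (y + s - 1) * ((t - s) / (y + t))) atTop (𝓝 (t - s)) := by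
    have h : Tendsto (fun y => (t - s + 1) / (y + t)) atTop (𝓝 0) :=
      tendsto_const_nhds.div_atTop (tendsto_atTop_add_const_right _ t tendsto_id)
    have h' := ((tendsto_const_nhds (x := (1 : ℝ))).sub h).const_mul (t - s)
    rw [sub_zero, mul_one] at h'
    refine h'.congr' ?_
    filter_upwards [eventually_gt_atTop (-t)] with y hy
    have : y + t ≠ 0 := by linarith
    field_simp
    ring
  have hx1 :
      t - s ≤ gammaRatioRoot s t (x + 1) * (digamma (x + 1 + t) - digamma (x + 1 + s)) := by
    refine le_of_tendsto hlim ?_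
    filter_upwards [eventually_gt_atTop (x + 1), eventually_gt_atTop (1 - s)] with y hy hys
    exact (hlower y hys).trans
      (hanti.antitoneOn (mem_Ioi.mpr (by linarith)) (mem_Ioi.mpr (by linarith)) hy.le)
  exact hx1.trans_lt (hanti hx (mem_Ioi.mpr (by linarith)) (lt_add_one x))

theorem strictMonoOn_z (hd : 1 < t - s) : StrictMonoOn (z s t) (Ioi (-s)) := by
  have hderiv : ∀ x ∈ Ioi (-s), HasDerivAt (z s t)
      (gammaRatioRoot s t x * ((digamma (x + t) - digamma (x + s)) / (t - s)) - 1) x :=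
    fun x hx => by
    have hx := mem_Ioi.mp hx
    refine ((hasDerivAt_gammaRatioRoot (by linarith) (by linarith)).sub (hasDerivAt_id x))
      |>.congr_of_eventuallyEq ?_
    filter_upwards [eventually_gt_nhds hx] with y hy
    exact z_eq_gammaRatioRoot_sub (by linarith) (by linarith)
  refine strictMonoOn_of_deriv_pos (convex_Ioi _)
    (fun x hx => (hderiv x hx).continuousAt.continuousWithinAt) fun x hx => ?_
  rw [interior_Ioi] at hx
  rw [(hderiv x hx).deriv, sub_pos, mul_div_assoc', one_lt_div (by linarith)]
  exact sub_lt_gammaRatioRoot_mul_digamma_sub hd hx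

end Monotone

theorem z_increasing (s t : ℝ) (hs : 0 ≤ s) (ht : 0 ≤ t) (h1 : 1 < |t - s|) :
    StrictMonoOn (z s t) (Set.Ioi 0) := by
  rcases lt_abs.mp h1 with hd | hd
  · exact (strictMonoOn_z hd).mono (Ioi_subset_Ioi (by linarith))
  · refine ((strictMonoOn_z (s := t) (t := s) (by linarith)).mono
      (Ioi_subset_Ioi (by linarith))).congr fun x hx => ?_
    exact z_comm (by linarith [mem_Ioi.mp hx]) (by linarith [mem_Ioi.mp hx])
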